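/- arXiv:1107.1163 — 7 statements merged into one kernel-verified Lean document; each statement's English description precedes it below -/
import Mathlib

section
/- Let A be symmetric, σ > 0 with A_σ = A + σI positive definite, and 1 ≤ k ≤ n. Then the set of maximizers of xᵀA_σx over {||x||_2 ≤ 1, ||x||_0 ≤ k} equals the set of maximizers of xᵀAx over {||x||_2 = 1, ||x||_0 ≤ k}. -/
/-!
Both quadratic forms are 2-homogeneous and the regularized one is positive off the origin, while
the sparsity constraint is invariant under rescaling. A maximizer over the ball strictly inside it
could be rescaled outwards and increase the value, and every point of the ball is dominated by its
radial projection onto the sphere; so both problems have the maximizers of the regularized form on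
the sphere, where it differs from `xᵀ A x` by the constant `σ`.
-/

open Finset Matrix

section HomogeneousMaximization

variable {E : Type*} [AddCommGroup E] [Module ℝ E] {ν q : E → ℝ} {C : E → Prop}

lemma apply_zero_of_smul_eq (hq : ∀ (c : ℝ) x, q (c • x) = c ^ 2 * q x) : q 0 = 0 := by
  simpa using hq 0 0

lemma ne_zero_of_gauge_eq_one (hν : ∀ (c : ℝ) x, ν (c • x) = |c| * ν x) {x : E}
    (hx : ν x = 1) : x ≠ 0 := by
  rintro rfl
  simp [show ν 0 = 0 by simpa using hν 0 0] at hx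

lemma gauge_normalize (hν : ∀ (c : ℝ) x, ν (c • x) = |c| * ν x) {y : E} (hy : 0 < ν y) :
    ν ((ν y)⁻¹ • y) = 1 := by
  rw [hν, abs_inv, abs_of_pos hy, inv_mul_cancel₀ hy.ne']

lemma eq_sq_mul_normalize (hq : ∀ (c : ℝ) x, q (c • x) = c ^ 2 * q x) {y : E} {r : ℝ}
    (hr : r ≠ 0) : q y = r ^ 2 * q (r⁻¹ • y) := by
  rw [hq, ← mul_assoc, ← mul_pow, mul_inv_cancel₀ hr, one_pow, one_mul]

lemma gauge_eq_one_of_forall_le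
    (hν : ∀ (c : ℝ) x, ν (c • x) = |c| * ν x) (hν0 : ∀ x, x ≠ 0 → 0 < ν x)
    (hq : ∀ (c : ℝ) x, q (c • x) = c ^ 2 * q x) (hqpos : ∀ x, x ≠ 0 → 0 < q x)
    (hC : ∀ (c : ℝ) x, c ≠ 0 → C x → C (c • x)) (he : ∃ e, ν e = 1 ∧ C e)
    {x : E} (hx : ν x ≤ 1) (hCx : C x) (hmax : ∀ y, ν y ≤ 1 → C y → q y ≤ q x) :
    ν x = 1 := by
  obtain ⟨e, hνe, hCe⟩ := he
  have hqx : 0 < q x :=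
    (hqpos e (ne_zero_of_gauge_eq_one hν hνe)).trans_le (hmax e hνe.le hCe)
  have hνx : 0 < ν x := hν0 x (by rintro rfl; simp [apply_zero_of_smul_eq hq] at hqx)
  have hscaled := hmax _ (gauge_normalize hν hνx).le (hC _ _ (inv_ne_zero hνx.ne') hCx)
  have hsplit := eq_sq_mul_normalize hq (y := x) hνx.ne'
  have hqu : 0 < q ((ν x)⁻¹ • x) := by
    rw [hsplit] at hqx
    exact pos_of_mul_pos_right hqx (sq_nonneg _)
  refine le_antisymm hx (not_lt.1 fun hlt => ?_)
  have := mul_lt_of_lt_one_left hqu (pow_lt_one₀ hνx.le hlt two_ne_zero)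
  linarith

lemma le_of_forall_gauge_eq_one_le
    (hν : ∀ (c : ℝ) x, ν (c • x) = |c| * ν x) (hν0 : ∀ x, x ≠ 0 → 0 < ν x)
    (hq : ∀ (c : ℝ) x, q (c • x) = c ^ 2 * q x) (hqpos : ∀ x, x ≠ 0 → 0 < q x)
    (hC : ∀ (c : ℝ) x, c ≠ 0 → C x → C (c • x))
    {x : E} (hx : ν x = 1) (hmax : ∀ y, ν y = 1 → C y → q y ≤ q x)
    {y : E} (hy : ν y ≤ 1) (hCy : C y) : q y ≤ q x := by
  rcases eq_or_ne y 0 with rfl | hy0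
  · rw [apply_zero_of_smul_eq hq]
    exact (hqpos x (ne_zero_of_gauge_eq_one hν hx)).le
  have hνy := hν0 y hy0
  have hscaled := hmax _ (gauge_normalize hν hνy) (hC _ _ (inv_ne_zero hνy.ne') hCy)
  have hqu := hqpos _ (smul_ne_zero (inv_ne_zero hνy.ne') hy0)
  calc q y = ν y ^ 2 * q ((ν y)⁻¹ • y) := eq_sq_mul_normalize hq hνy.ne'
    _ ≤ q ((ν y)⁻¹ • y) := mul_le_of_le_one_left hqu.le (pow_le_one₀ hνy.le hy)
    _ ≤ q x := hscaled

lemma maximizers_gauge_le_one_eq_maximizers_gauge_eq_one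
    (hν : ∀ (c : ℝ) x, ν (c • x) = |c| * ν x) (hν0 : ∀ x, x ≠ 0 → 0 < ν x)
    (hq : ∀ (c : ℝ) x, q (c • x) = c ^ 2 * q x) (hqpos : ∀ x, x ≠ 0 → 0 < q x)
    (hC : ∀ (c : ℝ) x, c ≠ 0 → C x → C (c • x)) (he : ∃ e, ν e = 1 ∧ C e) :
    {x | ν x ≤ 1 ∧ C x ∧ ∀ y, ν y ≤ 1 → C y → q y ≤ q x} =
      {x | ν x = 1 ∧ C x ∧ ∀ y, ν y = 1 → C y → q y ≤ q x} := by
  ext x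
  constructor
  · rintro ⟨hx, hCx, hmax⟩
    exact ⟨gauge_eq_one_of_forall_le hν hν0 hq hqpos hC he hx hCx hmax, hCx,
      fun y hy hCy => hmax y hy.le hCy⟩
  · rintro ⟨hx, hCx, hmax⟩
    exact ⟨hx.le, hCx, fun y => le_of_forall_gauge_eq_one_le hν hν0 hq hqpos hC hx hmax⟩

end HomogeneousMaximization

section EuclideanSparse

variable {ι : Type*} [Fintype ι]

lemma sqrt_sum_sq_smul (c : ℝ) (x : ι → ℝ) :
    √(∑ i, (c • x) i ^ 2) = |c| * √(∑ i, x i ^ 2) := by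
  simp only [Pi.smul_apply, smul_eq_mul, mul_pow, ← Finset.mul_sum]
  rw [Real.sqrt_mul (sq_nonneg c), Real.sqrt_sq_eq_abs]

lemma sqrt_sum_sq_pos {x : ι → ℝ} (hx : x ≠ 0) : 0 < √(∑ i, x i ^ 2) := by
  obtain ⟨i, hi⟩ := Function.ne_iff.1 hx
  exact Real.sqrt_pos.2 <| Finset.sum_pos' (fun j _ => sq_nonneg (x j))
    ⟨i, Finset.mem_univ i, pow_two_pos_of_ne_zero hi⟩

lemma filter_smul_ne_zero {c : ℝ} (hc : c ≠ 0) (x : ι → ℝ) :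
    univ.filter (fun i => (c • x) i ≠ 0) = univ.filter (fun i => x i ≠ 0) := by
  simp [hc]

lemma exists_sqrt_sum_sq_eq_one_card_le [DecidableEq ι] [Nonempty ι] {k : ℕ}
    (hk : 1 ≤ k) :
    ∃ e : ι → ℝ, √(∑ i, e i ^ 2) = 1 ∧ (univ.filter (e · ≠ 0)).card ≤ k := by
  refine ⟨Pi.single (Classical.arbitrary ι) 1, ?_, ?_⟩
  · simp [Pi.single_apply]
  · simp [Pi.single_apply, Finset.filter_eq', hk]

lemma dotProduct_smul_mulVec_smul {R : Type*} [CommSemiring R] (M : Matrix ι ι R) (c : R)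
    (v : ι → R) :
    (c • v) ⬝ᵥ (M *ᵥ (c • v)) = c ^ 2 * (v ⬝ᵥ (M *ᵥ v)) := by
  rw [mulVec_smul, dotProduct_smul, smul_dotProduct, smul_eq_mul, smul_eq_mul, ← mul_assoc,
    sq]

lemma dotProduct_add_smul_one_mulVec [DecidableEq ι] (A : Matrix ι ι ℝ) (σ : ℝ)
    (v : ι → ℝ) :
    v ⬝ᵥ ((A + σ • 1) *ᵥ v) = v ⬝ᵥ (A *ᵥ v) + σ * ∑ i, v i ^ 2 := by
  rw [add_mulVec, smul_mulVec, one_mulVec, dotProduct_add, dotProduct_smul, smul_eq_mul]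
  simp only [dotProduct, sq]

end EuclideanSparse

theorem argmax_regularized_eq_argmax_general (n : ℕ) (A : Matrix (Fin n) (Fin n) ℝ)
    (σ : ℝ)
    (hpd : (A + σ • (1 : Matrix (Fin n) (Fin n) ℝ)).PosDef)
    (k : ℕ) (hk1 : 1 ≤ k) (hkn : k ≤ n) :
    {x : Fin n → ℝ |
        Real.sqrt (∑ i, (x i) ^ 2) ≤ 1 ∧
        (Finset.univ.filter (fun i => x i ≠ 0)).card ≤ k ∧
        ∀ y : Fin n → ℝ,
          Real.sqrt (∑ i, (y i) ^ 2) ≤ 1 →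
          (Finset.univ.filter (fun i => y i ≠ 0)).card ≤ k →
          y ⬝ᵥ ((A + σ • (1 : Matrix (Fin n) (Fin n) ℝ)) *ᵥ y) ≤
            x ⬝ᵥ ((A + σ • (1 : Matrix (Fin n) (Fin n) ℝ)) *ᵥ x)} =
      {x : Fin n → ℝ |
        Real.sqrt (∑ i, (x i) ^ 2) = 1 ∧
        (Finset.univ.filter (fun i => x i ≠ 0)).card ≤ k ∧
        ∀ y : Fin n → ℝ,
          Real.sqrt (∑ i, (y i) ^ 2) = 1 →
          (Finset.univ.filter (fun i => y i ≠ 0)).card ≤ k →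
          y ⬝ᵥ (A *ᵥ y) ≤ x ⬝ᵥ (A *ᵥ x)} := by
  have hshift {v : Fin n → ℝ} (hv : √(∑ i, v i ^ 2) = 1) :
      v ⬝ᵥ ((A + σ • 1) *ᵥ v) = v ⬝ᵥ (A *ᵥ v) + σ := by
    rw [dotProduct_add_smul_one_mulVec, Real.sqrt_eq_one.1 hv, mul_one]
  have : Nonempty (Fin n) := Fin.pos_iff_nonempty.1 (by omega)
  refine (maximizers_gauge_le_one_eq_maximizers_gauge_eq_one
    (q := fun v => v ⬝ᵥ ((A + σ • 1) *ᵥ v))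
    sqrt_sum_sq_smul (fun _ => sqrt_sum_sq_pos) (dotProduct_smul_mulVec_smul (A + σ • 1))
    (fun _ hv => by simpa using hpd.dotProduct_mulVec_pos hv)
    (fun c x hc hx => (filter_smul_ne_zero hc x).symm ▸ hx)
    (exists_sqrt_sum_sq_eq_one_card_le hk1)).trans ?_
  ext x
  refine and_congr_right fun hx => and_congr_right fun _ => forall₂_congr fun y hy => ?_
  rw [hshift hx, hshift hy, add_le_add_iff_right]

theorem argmax_regularized_eq_argmax (n : ℕ) (A : Matrix (Fin n) (Fin n) ℝ)
    (hA : A.IsSymm) (σ : ℝ) (hσ : 0 < σ)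
    (hpd : (A + σ • (1 : Matrix (Fin n) (Fin n) ℝ)).PosDef)
    (k : ℕ) (hk1 : 1 ≤ k) (hkn : k ≤ n) :
    {x : Fin n → ℝ |
        Real.sqrt (∑ i, (x i) ^ 2) ≤ 1 ∧
        (Finset.univ.filter (fun i => x i ≠ 0)).card ≤ k ∧
        ∀ y : Fin n → ℝ,
          Real.sqrt (∑ i, (y i) ^ 2) ≤ 1 →
          (Finset.univ.filter (fun i => y i ≠ 0)).card ≤ k →
          y ⬝ᵥ ((A + σ • (1 : Matrix (Fin n) (Fin n) ℝ)) *ᵥ y) ≤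
            x ⬝ᵥ ((A + σ • (1 : Matrix (Fin n) (Fin n) ℝ)) *ᵥ x)} =
      {x : Fin n → ℝ |
        Real.sqrt (∑ i, (x i) ^ 2) = 1 ∧
        (Finset.univ.filter (fun i => x i ≠ 0)).card ≤ k ∧
        ∀ y : Fin n → ℝ,
          Real.sqrt (∑ i, (y i) ^ 2) = 1 →
          (Finset.univ.filter (fun i => y i ≠ 0)).card ≤ k →
          y ⬝ᵥ (A *ᵥ y) ≤ x ⬝ᵥ (A *ᵥ x)} :=
  argmax_regularized_eq_argmax_general n A σ hpd k hk1 hkn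
end

section
/- Let F : R^n → R be convex and C ⊆ R^n nonempty compact. Let {x^j} be generated by x^{j+1} ∈ argmax{⟨x − x^j, F'(x^j)⟩ : x ∈ C} with x^0 ∈ C. Then the sequence F(x^j) is monotonically nondecreasing and γ(x^j) = max{⟨v − x^j, F'(x^j)⟩ : v ∈ C} converges to 0 as j → ∞. -/
/-!
Since `x (j + 1)` maximizes the linearization at `x j` over `C` and `G (x j)` is a subgradient,
`0 ≤ γ j ≤ F (x (j + 1)) - F (x j)`. Hence `F ∘ x` is nondecreasing; it is bounded above because the
convex function `F` is continuous and the iterates stay in the compact set `C`. So `F ∘ x`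
converges, its increments tend to `0`, and `γ` is squeezed to `0`.
-/

open scoped RealInnerProductSpace
open Filter

theorem Monotone.tendsto_sub_succ_zero {u : ℕ → ℝ} (hu : Monotone u)
    (hbdd : BddAbove (Set.range u)) :
    Tendsto (fun j => u (j + 1) - u j) atTop (nhds 0) := by
  have hlim := tendsto_atTop_ciSup hu hbdd
  simpa using (hlim.comp (tendsto_add_atTop_nat 1)).sub hlim

section LinearizationGap

variable {E : Type*} [NormedAddCommGroup E] [InnerProductSpace ℝ E]
  {C : Set E} {y z g : E} {γ : ℝ}

theorem linearizationGap_nonneg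
    (hγ : IsGreatest {t : ℝ | ∃ v ∈ C, t = ⟪v - y, g⟫} γ) (hy : y ∈ C) : 0 ≤ γ :=
  hγ.2 ⟨y, hy, by simp⟩

theorem linearizationGap_le_sub_of_isMaxOn {F : E → ℝ}
    (hg : ∀ v, ⟪v - y, g⟫ ≤ F v - F y)
    (hz : ∀ v ∈ C, ⟪v - y, g⟫ ≤ ⟪z - y, g⟫)
    (hγ : IsGreatest {t : ℝ | ∃ v ∈ C, t = ⟪v - y, g⟫} γ) : γ ≤ F z - F y := by
  obtain ⟨v, hv, rfl⟩ := hγ.1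
  exact (hz v hv).trans (hg z)

end LinearizationGap

theorem congradu_monotone_and_gamma_tendsto_zero_general (n : ℕ)
    (F : EuclideanSpace ℝ (Fin n) → ℝ) (hF : ConvexOn ℝ Set.univ F)
    (G : EuclideanSpace ℝ (Fin n) → EuclideanSpace ℝ (Fin n))
    (hG : ∀ x v, ⟪v - x, G x⟫ ≤ F v - F x)
    (C : Set (EuclideanSpace ℝ (Fin n))) (hC : IsCompact C)
    (x : ℕ → EuclideanSpace ℝ (Fin n)) (hx0 : x 0 ∈ C)
    (hstep : ∀ j, x (j + 1) ∈ C ∧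
      ∀ v ∈ C, ⟪v - x j, G (x j)⟫ ≤ ⟪x (j + 1) - x j, G (x j)⟫)
    (γ : ℕ → ℝ)
    (hγ : ∀ j, IsGreatest {t : ℝ | ∃ v ∈ C, t = ⟪v - x j, G (x j)⟫} (γ j)) :
    Monotone (fun j => F (x j)) ∧ Tendsto γ atTop (nhds 0) := by
  have hxC : ∀ j, x j ∈ C := fun j => Nat.rec hx0 (fun k _ => (hstep k).1) j
  have hγ_nonneg j : 0 ≤ γ j := linearizationGap_nonneg (hγ j) (hxC j)
  have hγ_le j : γ j ≤ F (x (j + 1)) - F (x j) :=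
    linearizationGap_le_sub_of_isMaxOn (hG (x j)) (hstep j).2 (hγ j)
  have hmono : Monotone (fun j => F (x j)) :=
    monotone_nat_of_le_succ fun j => by linarith [hγ_nonneg j, hγ_le j]
  have hbdd : BddAbove (Set.range fun j => F (x j)) := by
    obtain ⟨M, hM⟩ := hC.bddAbove_image ((hF.continuousOn isOpen_univ).mono C.subset_univ)
    exact ⟨M, by rintro _ ⟨j, rfl⟩; exact hM ⟨x j, hxC j, rfl⟩⟩
  exact ⟨hmono, tendsto_of_tendsto_of_tendsto_of_le_of_le tendsto_const_nhds
    (hmono.tendsto_sub_succ_zero hbdd) hγ_nonneg hγ_le⟩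

theorem congradu_monotone_and_gamma_tendsto_zero (n : ℕ)
    (F : EuclideanSpace ℝ (Fin n) → ℝ) (hF : ConvexOn ℝ Set.univ F)
    (G : EuclideanSpace ℝ (Fin n) → EuclideanSpace ℝ (Fin n))
    (hG : ∀ x v, ⟪v - x, G x⟫ ≤ F v - F x)
    (C : Set (EuclideanSpace ℝ (Fin n))) (hCne : C.Nonempty) (hC : IsCompact C)
    (x : ℕ → EuclideanSpace ℝ (Fin n)) (hx0 : x 0 ∈ C)
    (hstep : ∀ j, x (j + 1) ∈ C ∧
      ∀ v ∈ C, ⟪v - x j, G (x j)⟫ ≤ ⟪x (j + 1) - x j, G (x j)⟫)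
    (γ : ℕ → ℝ)
    (hγ : ∀ j, IsGreatest {t : ℝ | ∃ v ∈ C, t = ⟪v - x j, G (x j)⟫} (γ j)) :
    Monotone (fun j => F (x j)) ∧ Tendsto γ atTop (nhds 0) :=
  congradu_monotone_and_gamma_tendsto_zero_general n F hF G hG C hC x hx0 hstep γ hγ
end

section
/- Let F : R^n → R be convex and continuously differentiable, C ⊆ R^n nonempty compact, and {x^j} the ConGradU sequence x^{j+1} ∈ argmax{⟨x − x^j, ∇F(x^j)⟩ : x ∈ C}. Then every limit point x^∞ of {x^j} is a stationary point, i.e., ⟨v − x^∞, ∇F(x^∞)⟩ ≤ 0 for all v ∈ C. -/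
open scoped RealInnerProductSpace
open Filter Topology Set

/-!
Write `g j = ⟪x (j+1) - x j, ∇F (x j)⟫` for the gap of the `j`-th step. Testing the step
against `v = x j` gives `g j ≥ 0`, and the gradient inequality of the convex function `F` gives
`g j ≤ F (x (j+1)) - F (x j)`. Hence `F ∘ x` is nondecreasing, and bounded on the compact `C`, so
its increments, and with them the gaps, tend to `0`. Since `⟪v - x j, ∇F (x j)⟫ ≤ g j` for every
`v ∈ C` and the left side is continuous in `x j`, passing to a subsequence converging to a limit
point gives stationarity there.
-/

theorem ConvexOn.fderiv_sub_le {E : Type*} [NormedAddCommGroup E] [NormedSpace ℝ E]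
    {s : Set E} {F : E → ℝ} (hF : ConvexOn ℝ s F) {a b : E} (ha : a ∈ s) (hb : b ∈ s)
    (hd : DifferentiableAt ℝ F a) : fderiv ℝ F a (b - a) ≤ F b - F a := by
  have hline : ConvexOn ℝ (Icc 0 1) (F ∘ AffineMap.lineMap (k := ℝ) a b) :=
    (hF.comp_affineMap _).subset (fun t ht => hF.1.lineMap_mem ha hb ht) (convex_Icc 0 1)
  have hderiv : HasDerivAt (F ∘ AffineMap.lineMap a b) (fderiv ℝ F a (b - a)) (0 : ℝ) :=
    hd.hasFDerivAt.comp_hasDerivAt_of_eq 0 AffineMap.hasDerivAt_lineMap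
      (AffineMap.lineMap_apply_zero a b).symm
  simpa [slope_def_field] using
    hline.le_slope_of_hasDerivAt (left_mem_Icc.2 zero_le_one) (right_mem_Icc.2 zero_le_one)
      one_pos hderiv

theorem ConvexOn.inner_gradient_sub_le {E : Type*} [NormedAddCommGroup E]
    [InnerProductSpace ℝ E] [CompleteSpace E] {s : Set E} {F : E → ℝ} (hF : ConvexOn ℝ s F)
    {a b : E} (ha : a ∈ s) (hb : b ∈ s) (hd : DifferentiableAt ℝ F a) :
    ⟪b - a, gradient F a⟫ ≤ F b - F a := by
  simpa [real_inner_comm] using hF.fderiv_sub_le ha hb hd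

theorem ContDiff.continuous_gradient {𝕜 E : Type*} [RCLike 𝕜] [NormedAddCommGroup E]
    [InnerProductSpace 𝕜 E] [CompleteSpace E] {f : E → 𝕜} (hf : ContDiff 𝕜 1 f) :
    Continuous (gradient f) :=
  (InnerProductSpace.toDual 𝕜 E).symm.continuous.comp (hf.continuous_fderiv one_ne_zero)

theorem MapClusterPt.le_of_le_of_tendsto {α : Type*} [TopologicalSpace α]
    [FirstCountableTopology α] [Preorder α] [OrderClosedTopology α] {u w : ℕ → α} {a c : α}
    (ha : MapClusterPt a atTop u) (hw : Tendsto w atTop (𝓝 c)) (hle : ∀ j, u j ≤ w j) :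
    a ≤ c := by
  obtain ⟨ψ, hψ, hlim⟩ := ha.tendsto_subseq
  exact le_of_tendsto_of_tendsto' hlim (hw.comp hψ.tendsto_atTop) fun k => hle (ψ k)

theorem tendsto_zero_of_bddAbove_of_le_succ_sub {f g : ℕ → ℝ} (hbdd : BddAbove (range f))
    (hg : ∀ j, 0 ≤ g j) (hgf : ∀ j, g j ≤ f (j + 1) - f j) : Tendsto g atTop (𝓝 0) := by
  have hmono : Monotone f := monotone_nat_of_le_succ fun j => by linarith [hg j, hgf j]
  have hlim := tendsto_atTop_ciSup hmono hbdd
  have hincr : Tendsto (fun j => f (j + 1) - f j) atTop (𝓝 0) := by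
    simpa using (hlim.comp (tendsto_add_atTop_nat 1)).sub hlim
  exact squeeze_zero hg hgf hincr

section ConditionalGradient

variable {E : Type*} [NormedAddCommGroup E] [InnerProductSpace ℝ E] [CompleteSpace E]

def IsConGradUSeq (F : E → ℝ) (C : Set E) (x : ℕ → E) : Prop :=
  x 0 ∈ C ∧ ∀ j, x (j + 1) ∈ C ∧
    ∀ v ∈ C, ⟪v - x j, gradient F (x j)⟫ ≤ ⟪x (j + 1) - x j, gradient F (x j)⟫

def IsStationaryOn (F : E → ℝ) (C : Set E) (a : E) : Prop :=
  ∀ v ∈ C, ⟪v - a, gradient F a⟫ ≤ 0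

namespace IsConGradUSeq

variable {F : E → ℝ} {C : Set E} {x : ℕ → E}

theorem mem (h : IsConGradUSeq F C x) : ∀ j, x j ∈ C
  | 0 => h.1
  | j + 1 => (h.2 j).1

theorem gap_nonneg (h : IsConGradUSeq F C x) (j : ℕ) :
    0 ≤ ⟪x (j + 1) - x j, gradient F (x j)⟫ := by
  simpa using (h.2 j).2 (x j) (h.mem j)

theorem tendsto_gap (h : IsConGradUSeq F C x) {s : Set E} (hF : ConvexOn ℝ s F) (hCs : C ⊆ s)
    (hC : IsCompact C) (hFd : ∀ y ∈ C, DifferentiableAt ℝ F y) :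
    Tendsto (fun j => ⟪x (j + 1) - x j, gradient F (x j)⟫) atTop (𝓝 0) := by
  have hbdd : BddAbove (range (F ∘ x)) :=
    (hC.bddAbove_image fun y hy => (hFd y hy).continuousAt.continuousWithinAt).mono
      (by rintro _ ⟨j, rfl⟩; exact mem_image_of_mem F (h.mem j))
  exact tendsto_zero_of_bddAbove_of_le_succ_sub hbdd h.gap_nonneg fun j =>
    hF.inner_gradient_sub_le (hCs (h.mem j)) (hCs (h.mem (j + 1))) (hFd _ (h.mem j))

theorem isStationaryOn_of_mapClusterPt (h : IsConGradUSeq F C x)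
    (hgap : Tendsto (fun j => ⟪x (j + 1) - x j, gradient F (x j)⟫) atTop (𝓝 0)) {a : E}
    (hF : ContinuousAt (gradient F) a) (ha : MapClusterPt a atTop x) : IsStationaryOn F C a :=
  fun v hv => MapClusterPt.le_of_le_of_tendsto
    (ha.continuousAt_comp (f := fun y => ⟪v - y, gradient F y⟫)
      ((continuousAt_const.sub continuousAt_id).inner hF)) hgap
    fun j => (h.2 j).2 v hv

end IsConGradUSeq

end ConditionalGradient

theorem congradu_limit_points_stationary_general (n : ℕ)
    (F : EuclideanSpace ℝ (Fin n) → ℝ) (hF : ConvexOn ℝ Set.univ F)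
    (hF1 : ContDiff ℝ 1 F)
    (C : Set (EuclideanSpace ℝ (Fin n))) (hC : IsCompact C)
    (x : ℕ → EuclideanSpace ℝ (Fin n)) (hx0 : x 0 ∈ C)
    (hstep : ∀ j, x (j + 1) ∈ C ∧
      ∀ v ∈ C, ⟪v - x j, gradient F (x j)⟫ ≤ ⟪x (j + 1) - x j, gradient F (x j)⟫) :
    ∀ xlim : EuclideanSpace ℝ (Fin n), MapClusterPt xlim atTop x →
      ∀ v ∈ C, ⟪v - xlim, gradient F xlim⟫ ≤ 0 := by
  have hseq : IsConGradUSeq F C x := ⟨hx0, hstep⟩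
  have hgap := hseq.tendsto_gap hF (subset_univ C) hC fun y _ =>
    hF1.differentiable one_ne_zero y
  intro xlim hcl
  exact hseq.isStationaryOn_of_mapClusterPt hgap hF1.continuous_gradient.continuousAt hcl

theorem congradu_limit_points_stationary (n : ℕ)
    (F : EuclideanSpace ℝ (Fin n) → ℝ) (hF : ConvexOn ℝ Set.univ F)
    (hF1 : ContDiff ℝ 1 F)
    (C : Set (EuclideanSpace ℝ (Fin n))) (hCne : C.Nonempty) (hC : IsCompact C)
    (x : ℕ → EuclideanSpace ℝ (Fin n)) (hx0 : x 0 ∈ C)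
    (hstep : ∀ j, x (j + 1) ∈ C ∧
      ∀ v ∈ C, ⟪v - x j, gradient F (x j)⟫ ≤ ⟪x (j + 1) - x j, gradient F (x j)⟫) :
    ∀ xlim : EuclideanSpace ℝ (Fin n), MapClusterPt xlim atTop x →
      ∀ v ∈ C, ⟪v - xlim, gradient F xlim⟫ ≤ 0 :=
  congradu_limit_points_stationary_general n F hF hF1 C hC x hx0 hstep
end

section
/- Given nonzero a ∈ R^n and 1 ≤ k ≤ n, max{⟨a,x⟩² : ||x||_2 = 1, ||x||_0 ≤ k} = ||T_k(a)||_2², attained at x* = T_k(a)/||T_k(a)||_2. -/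
open Finset

/-!
A best `k`-sparse approximation `T` of `a` agrees with `a` on its support `S`: otherwise `a`
restricted to `S` would be a better one. Hence its error is `∑ i ∉ S, a i ^ 2`, so `S`
maximizes `∑ i ∈ s, a i ^ 2` over all `s` with `#s ≤ k`, and this maximum is `‖T‖²`. For a
unit vector `x` supported on `s`, Cauchy–Schwarz gives `⟨a, x⟩² ≤ ∑ i ∈ s, a i ^ 2 ≤ ‖T‖²`,
with equality at `x = T / ‖T‖` because `⟨a, T⟩ = ‖T‖²`.
-/

section

variable {ι : Type*} [Fintype ι]

def IsBestSparseApprox (k : ℕ) (a T : ι → ℝ) : Prop :=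
  #{i | T i ≠ 0} ≤ k ∧ ∀ x : ι → ℝ, #{i | x i ≠ 0} ≤ k → ∑ i, (T i - a i) ^ 2 ≤ ∑ i, (x i - a i) ^ 2

lemma card_support_piecewise_zero_le [DecidableEq ι] (s : Finset ι) (a : ι → ℝ) :
    #{i | s.piecewise a 0 i ≠ 0} ≤ #s :=
  card_le_card fun i hi => by
    by_contra h
    simp [h] at hi

lemma sum_sq_sub_eq_of_eq_zero_off [DecidableEq ι] (s : Finset ι) (a T : ι → ℝ) (hT : ∀ i ∉ s, T i = 0) :
    ∑ i, (T i - a i) ^ 2 = ∑ i ∈ s, (T i - a i) ^ 2 + ∑ i ∈ sᶜ, a i ^ 2 := by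
  rw [← sum_add_sum_compl s]
  congr 1
  exact sum_congr rfl fun i hi => by simp [hT i (mem_compl.mp hi)]

lemma sum_sq_piecewise_zero_sub [DecidableEq ι] (s : Finset ι) (a : ι → ℝ) :
    ∑ i, (s.piecewise a 0 i - a i) ^ 2 = ∑ i ∈ sᶜ, a i ^ 2 := by
  rw [sum_sq_sub_eq_of_eq_zero_off s a _ fun i hi => piecewise_eq_of_notMem _ _ _ hi,
    sum_eq_zero fun i hi => by simp [piecewise_eq_of_mem _ _ _ hi], zero_add]

namespace IsBestSparseApprox

variable {k : ℕ} {a T : ι → ℝ}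

lemma sum_sq_sub_le [DecidableEq ι] (hT : IsBestSparseApprox k a T) {s : Finset ι} (hs : #s ≤ k) :
    ∑ i, (T i - a i) ^ 2 ≤ ∑ i ∈ sᶜ, a i ^ 2 := by
  simpa [sum_sq_piecewise_zero_sub] using
    hT.2 _ ((card_support_piecewise_zero_le s a).trans hs)

lemma eq_of_ne_zero (hT : IsBestSparseApprox k a T) {i : ι} (hi : T i ≠ 0) : T i = a i := by
  classical
  set S := univ.filter (T · ≠ 0)
  have hoff : ∀ j ∉ S, T j = 0 := by simp [S]
  have hle := hT.sum_sq_sub_le hT.1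
  rw [sum_sq_sub_eq_of_eq_zero_off S a T hoff] at hle
  have hzero := (sum_eq_zero_iff_of_nonneg fun j _ => sq_nonneg (T j - a j)).mp
    (le_antisymm (by linarith) (sum_nonneg fun j _ => sq_nonneg _))
  simpa [sub_eq_zero] using hzero i (by simpa [S] using hi)

lemma sq_eq_mul (hT : IsBestSparseApprox k a T) (i : ι) : T i ^ 2 = a i * T i := by
  by_cases hi : T i = 0
  · simp [hi]
  · rw [hT.eq_of_ne_zero hi, sq]

lemma sum_mul_eq_sum_sq (hT : IsBestSparseApprox k a T) :
    ∑ i, a i * T i = ∑ i, T i ^ 2 :=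
  sum_congr rfl fun i _ => (hT.sq_eq_mul i).symm

lemma sum_sq_le_sum_sq (hT : IsBestSparseApprox k a T) {s : Finset ι} (hs : #s ≤ k) :
    ∑ i ∈ s, a i ^ 2 ≤ ∑ i, T i ^ 2 := by
  classical
  have herr : ∑ i, (T i - a i) ^ 2 = ∑ i, a i ^ 2 - ∑ i, T i ^ 2 := by
    rw [← sum_sub_distrib]
    exact sum_congr rfl fun i _ => by linear_combination 2 * hT.sq_eq_mul i
  have := hT.sum_sq_sub_le hs
  rw [herr, ← sum_add_sum_compl s] at this
  linarith

lemma sum_sq_pos (hT : IsBestSparseApprox k a T) (ha : a ≠ 0) (hk : 1 ≤ k) :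
    0 < ∑ i, T i ^ 2 := by
  obtain ⟨i, hi⟩ := Function.ne_iff.mp ha
  calc 0 < a i ^ 2 := sq_pos_of_ne_zero hi
    _ = ∑ j ∈ {i}, a j ^ 2 := sum_singleton _ _ |>.symm
    _ ≤ ∑ j, T j ^ 2 := hT.sum_sq_le_sum_sq (by simpa using hk)

end IsBestSparseApprox

lemma sq_sum_mul_le_sum_sq_support_mul (a x : ι → ℝ) :
    (∑ i, a i * x i) ^ 2 ≤ (∑ i ∈ {i | x i ≠ 0}, a i ^ 2) * ∑ i, x i ^ 2 := by
  have hsupp : ∑ i ∈ {i | x i ≠ 0}, a i * x i = ∑ i, a i * x i :=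
    sum_filter_of_ne fun i _ hne hx => hne (by simp [hx])
  calc (∑ i, a i * x i) ^ 2 = (∑ i ∈ {i | x i ≠ 0}, a i * x i) ^ 2 := by rw [hsupp]
    _ ≤ (∑ i ∈ {i | x i ≠ 0}, a i ^ 2) * ∑ i ∈ {i | x i ≠ 0}, x i ^ 2 :=
      sum_mul_sq_le_sq_mul_sq _ a x
    _ ≤ (∑ i ∈ {i | x i ≠ 0}, a i ^ 2) * ∑ i, x i ^ 2 :=
      mul_le_mul_of_nonneg_left
        (sum_le_sum_of_subset_of_nonneg (subset_univ _) fun i _ _ => sq_nonneg _)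
        (sum_nonneg fun i _ => sq_nonneg _)

lemma sum_mul_div_sqrt_sum_sq {a x : ι → ℝ} (hax : ∑ i, a i * x i = ∑ i, x i ^ 2) :
    ∑ i, a i * (x i / Real.sqrt (∑ j, x j ^ 2)) = Real.sqrt (∑ i, x i ^ 2) := by
  simp_rw [← mul_div_assoc, ← sum_div, hax]
  exact Real.div_sqrt

lemma sqrt_sum_sq_div_sqrt_sum_sq {x : ι → ℝ} (hx : 0 < ∑ i, x i ^ 2) :
    Real.sqrt (∑ i, (x i / Real.sqrt (∑ j, x j ^ 2)) ^ 2) = 1 := by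
  simp_rw [div_pow, ← sum_div, Real.sq_sqrt hx.le, div_self hx.ne', Real.sqrt_one]

lemma filter_div_sqrt_sum_sq_ne_zero {x : ι → ℝ} (hx : 0 < ∑ i, x i ^ 2) :
    univ.filter (fun i => x i / Real.sqrt (∑ j, x j ^ 2) ≠ 0) = univ.filter (x · ≠ 0) := by
  simp [(Real.sqrt_pos.mpr hx).ne']

end

theorem max_squared_linear_over_sphere_l0_general (n : ℕ) (a : Fin n → ℝ) (ha : a ≠ 0)
    (k : ℕ) (hk1 : 1 ≤ k)
    (T : Fin n → ℝ)
    (hT0 : (Finset.univ.filter (fun i => T i ≠ 0)).card ≤ k)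
    (hTmin : ∀ x : Fin n → ℝ, (Finset.univ.filter (fun i => x i ≠ 0)).card ≤ k →
      ∑ i, (T i - a i) ^ 2 ≤ ∑ i, (x i - a i) ^ 2) :
    IsGreatest {y : ℝ | ∃ x : Fin n → ℝ,
        Real.sqrt (∑ i, (x i) ^ 2) = 1 ∧
        (Finset.univ.filter (fun i => x i ≠ 0)).card ≤ k ∧
        y = (∑ i, a i * x i) ^ 2}
      ((Real.sqrt (∑ i, (T i) ^ 2)) ^ 2) ∧
    Real.sqrt (∑ i, (T i / Real.sqrt (∑ j, (T j) ^ 2)) ^ 2) = 1 ∧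
    (Finset.univ.filter (fun i => T i / Real.sqrt (∑ j, (T j) ^ 2) ≠ 0)).card ≤ k ∧
    (∑ i, a i * (T i / Real.sqrt (∑ j, (T j) ^ 2))) ^ 2 =
      (Real.sqrt (∑ i, (T i) ^ 2)) ^ 2 := by
  have hT : IsBestSparseApprox k a T := ⟨hT0, hTmin⟩
  have hpos := hT.sum_sq_pos ha hk1
  have hunit := sqrt_sum_sq_div_sqrt_sum_sq hpos
  have hsparse : #{i | T i / Real.sqrt (∑ j, T j ^ 2) ≠ 0} ≤ k := by
    rwa [filter_div_sqrt_sum_sq_ne_zero hpos]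
  have hvalue := sum_mul_div_sqrt_sum_sq hT.sum_mul_eq_sum_sq
  refine ⟨⟨⟨_, hunit, hsparse, by rw [hvalue]⟩, ?_⟩, hunit, hsparse, by rw [hvalue]⟩
  rintro y ⟨x, hx1, hxk, rfl⟩
  have hx : ∑ i, x i ^ 2 = 1 := by
    rw [← Real.sqrt_eq_one, hx1]
  calc (∑ i, a i * x i) ^ 2 ≤ (∑ i ∈ {i | x i ≠ 0}, a i ^ 2) * ∑ i, x i ^ 2 :=
        sq_sum_mul_le_sum_sq_support_mul a x
    _ ≤ ∑ i, T i ^ 2 := by rw [hx, mul_one]; exact hT.sum_sq_le_sum_sq hxk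
    _ = Real.sqrt (∑ i, T i ^ 2) ^ 2 := (Real.sq_sqrt hpos.le).symm

/-- Maximizing a squared linear function over the sphere intersected with an `l0` constraint:
`T` is any best `k`-sparse approximation of `a`. -/
theorem max_squared_linear_over_sphere_l0 (n : ℕ) (a : Fin n → ℝ) (ha : a ≠ 0)
    (k : ℕ) (hk1 : 1 ≤ k) (hkn : k ≤ n)
    (T : Fin n → ℝ)
    (hT0 : (Finset.univ.filter (fun i => T i ≠ 0)).card ≤ k)
    (hTmin : ∀ x : Fin n → ℝ, (Finset.univ.filter (fun i => x i ≠ 0)).card ≤ k →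
      ∑ i, (T i - a i) ^ 2 ≤ ∑ i, (x i - a i) ^ 2) :
    IsGreatest {y : ℝ | ∃ x : Fin n → ℝ,
        Real.sqrt (∑ i, (x i) ^ 2) = 1 ∧
        (Finset.univ.filter (fun i => x i ≠ 0)).card ≤ k ∧
        y = (∑ i, a i * x i) ^ 2}
      ((Real.sqrt (∑ i, (T i) ^ 2)) ^ 2) ∧
    Real.sqrt (∑ i, (T i / Real.sqrt (∑ j, (T j) ^ 2)) ^ 2) = 1 ∧
    (Finset.univ.filter (fun i => T i / Real.sqrt (∑ j, (T j) ^ 2) ≠ 0)).card ≤ k ∧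
    (∑ i, a i * (T i / Real.sqrt (∑ j, (T j) ^ 2))) ^ 2 =
      (Real.sqrt (∑ i, (T i) ^ 2)) ^ 2 :=
  max_squared_linear_over_sphere_l0_general n a ha k hk1 T hT0 hTmin
end

section
/- Given a ∈ R^n and s > 0, max{⟨a,x⟩² − s||x||_0 : ||x||_2 = 1} = Σ_{i=1}^n (a_i² − s)_+, and (assuming some a_i² > s) a maximizer is x*_i = a_i[sgn(a_i² − s)]_+ / sqrt(Σ_j a_j²[sgn(a_j² − s)]_+). -/
open Finset

/-! On the support `S` of a unit vector `x`, Cauchy–Schwarz gives `⟨a, x⟩² ≤ ∑_{i ∈ S} aᵢ²`, so the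
objective is at most `∑_{i ∈ S} (aᵢ² - s) ≤ ∑ᵢ (aᵢ² - s)₊`. Both inequalities are equalities when `x`
is `a` restricted to `S = {i | s < aᵢ²}` and normalized; as `0 ≤ s`, that vector has support
exactly `S`. -/

namespace L0Penalized

variable {ι : Type*}

noncomputable def hardThreshold (s : ℝ) (a : ι → ℝ) : ι → ℝ :=
  fun i => if s < a i ^ 2 then a i else 0

theorem hardThreshold_ne_zero_iff {s : ℝ} (hs : 0 ≤ s) (a : ι → ℝ) (i : ι) :
    hardThreshold s a i ≠ 0 ↔ s < a i ^ 2 := by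
  unfold hardThreshold
  split_ifs with h
  · exact iff_of_true (fun h0 => by simp [h0] at h; linarith) h
  · exact iff_of_false (not_not.mpr rfl) h

theorem max_sign_zero_eq_ite (t : ℝ) : max (Real.sign t) 0 = if 0 < t then 1 else 0 := by
  rcases lt_trichotomy t 0 with h | rfl | h
  · simp [Real.sign_of_neg h, h.not_gt]
  · simp
  · simp [Real.sign_of_pos h, h]

theorem mul_max_sign_zero_eq_hardThreshold (s : ℝ) (a : ι → ℝ) (i : ι) :
    a i * max (Real.sign (a i ^ 2 - s)) 0 = hardThreshold s a i := by
  simp [max_sign_zero_eq_ite, hardThreshold]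

theorem sq_mul_max_sign_zero_eq_sq_hardThreshold (s : ℝ) (a : ι → ℝ) (i : ι) :
    a i ^ 2 * max (Real.sign (a i ^ 2 - s)) 0 = hardThreshold s a i ^ 2 := by
  simp [max_sign_zero_eq_ite, hardThreshold, apply_ite (· ^ 2)]

variable [Fintype ι]

theorem sum_le_sum_max_zero (f : ι → ℝ) (S : Finset ι) : ∑ i ∈ S, f i ≤ ∑ i, max (f i) 0 :=
  calc ∑ i ∈ S, f i ≤ ∑ i ∈ S, max (f i) 0 := sum_le_sum fun _ _ => le_max_left _ _
    _ ≤ ∑ i, max (f i) 0 :=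
      sum_le_sum_of_subset_of_nonneg (subset_univ S) fun _ _ _ => le_max_right _ _

theorem sum_max_zero_eq_sum_filter_pos (f : ι → ℝ) :
    ∑ i, max (f i) 0 = ∑ i with 0 < f i, f i := by
  rw [sum_filter]
  refine sum_congr rfl fun i _ => ?_
  split_ifs with h
  · exact max_eq_left h.le
  · exact max_eq_right (not_lt.mp h)

noncomputable def objective (a : ι → ℝ) (s : ℝ) (x : ι → ℝ) : ℝ :=
  (∑ i, a i * x i) ^ 2 - s * (#{i | x i ≠ 0} : ℝ)

theorem sq_sum_mul_le_sum_support_sq_mul (a x : ι → ℝ) :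
    (∑ i, a i * x i) ^ 2 ≤ (∑ i with x i ≠ 0, a i ^ 2) * ∑ i, x i ^ 2 := by
  have hsupp : ∀ f : ι → ℝ, (∀ i, x i = 0 → f i = 0) → ∑ i with x i ≠ 0, f i = ∑ i, f i :=
    fun f hf => sum_filter_of_ne fun i _ hi hx => hi (hf i hx)
  rw [← hsupp (fun i => a i * x i) (by simp_all), ← hsupp (fun i => x i ^ 2) (by simp_all)]
  exact sum_mul_sq_le_sq_mul_sq _ a x

theorem objective_le_sum_max_zero (a : ι → ℝ) (s : ℝ) {x : ι → ℝ} (hx : ∑ i, x i ^ 2 = 1) :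
    objective a s x ≤ ∑ i, max (a i ^ 2 - s) 0 := by
  have hcs := sq_sum_mul_le_sum_support_sq_mul a x
  rw [hx, mul_one] at hcs
  calc objective a s x ≤ ∑ i with x i ≠ 0, (a i ^ 2 - s) := by
        rw [objective, sum_sub_distrib, sum_const, nsmul_eq_mul, mul_comm s]
        linarith
    _ ≤ ∑ i, max (a i ^ 2 - s) 0 := sum_le_sum_max_zero _ _

section l2Normalize

noncomputable def l2Normalize (v : ι → ℝ) : ι → ℝ := fun i => v i / √(∑ j, v j ^ 2)

variable {v : ι → ℝ}

theorem sum_sq_l2Normalize (hv : 0 < ∑ i, v i ^ 2) : ∑ i, l2Normalize v i ^ 2 = 1 := by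
  simp only [l2Normalize, div_pow, ← sum_div, Real.sq_sqrt hv.le, div_self hv.ne']

theorem sum_mul_l2Normalize (a : ι → ℝ) :
    ∑ i, a i * l2Normalize v i = (∑ i, a i * v i) / √(∑ i, v i ^ 2) := by
  simp only [l2Normalize, mul_div_assoc', sum_div]

theorem l2Normalize_ne_zero_iff (hv : 0 < ∑ i, v i ^ 2) (i : ι) :
    l2Normalize v i ≠ 0 ↔ v i ≠ 0 := by
  simp [l2Normalize, Real.sqrt_ne_zero'.mpr hv]

end l2Normalize

section hardThreshold

variable (s : ℝ) (a : ι → ℝ)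

theorem sum_mul_hardThreshold :
    ∑ i, a i * hardThreshold s a i = ∑ i, hardThreshold s a i ^ 2 := by
  refine sum_congr rfl fun i _ => ?_
  unfold hardThreshold
  split_ifs <;> ring

theorem sum_sq_hardThreshold :
    ∑ i, hardThreshold s a i ^ 2 = ∑ i with s < a i ^ 2, a i ^ 2 := by
  rw [sum_filter]
  refine sum_congr rfl fun i _ => ?_
  unfold hardThreshold
  split_ifs <;> ring

end hardThreshold

theorem objective_l2Normalize_hardThreshold {s : ℝ} (hs : 0 ≤ s) (a : ι → ℝ)
    (hex : ∃ i, s < a i ^ 2) :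
    ∑ i, l2Normalize (hardThreshold s a) i ^ 2 = 1 ∧
      objective a s (l2Normalize (hardThreshold s a)) = ∑ i, max (a i ^ 2 - s) 0 := by
  set T := ∑ i, hardThreshold s a i ^ 2 with hT
  obtain ⟨i₀, hi₀⟩ := hex
  have hTpos : 0 < T := by
    rw [hT, sum_sq_hardThreshold]
    exact (hs.trans_lt hi₀).trans_le <|
      single_le_sum (fun i _ => sq_nonneg (a i)) (mem_filter.mpr ⟨mem_univ _, hi₀⟩)
  refine ⟨sum_sq_l2Normalize hTpos, ?_⟩
  have hsupp : #{i | l2Normalize (hardThreshold s a) i ≠ 0} = #{i | s < a i ^ 2} := by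
    simp only [l2Normalize_ne_zero_iff hTpos, hardThreshold_ne_zero_iff hs a]
  rw [objective, sum_mul_l2Normalize, sum_mul_hardThreshold, ← hT, Real.div_sqrt,
    Real.sq_sqrt hTpos.le, hsupp, sum_max_zero_eq_sum_filter_pos, hT, sum_sq_hardThreshold]
  simp only [sub_pos, sum_sub_distrib, sum_const, nsmul_eq_mul, mul_comm s]

end L0Penalized

open L0Penalized in
/-- The `l0`-penalized squared-linear maximization over the unit sphere has the
closed-form optimal value `∑ (aᵢ² - s)₊`, attained at the stated thresholded vector. -/
theorem max_squared_linear_l0_penalized (n : ℕ) (a : Fin n → ℝ) (s : ℝ) (hs : 0 < s)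
    (hex : ∃ i, s < (a i) ^ 2) :
    IsGreatest {y : ℝ | ∃ x : Fin n → ℝ,
        Real.sqrt (∑ i, (x i) ^ 2) = 1 ∧
        y = (∑ i, a i * x i) ^ 2 -
          s * ((Finset.univ.filter (fun i => x i ≠ 0)).card : ℝ)}
      (∑ i, max ((a i) ^ 2 - s) 0) ∧
    (letI xstar : Fin n → ℝ := fun i =>
        a i * max (Real.sign ((a i) ^ 2 - s)) 0 /
          Real.sqrt (∑ j, (a j) ^ 2 * max (Real.sign ((a j) ^ 2 - s)) 0)
     Real.sqrt (∑ i, (xstar i) ^ 2) = 1 ∧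
       (∑ i, a i * xstar i) ^ 2 -
          s * ((Finset.univ.filter (fun i => xstar i ≠ 0)).card : ℝ) =
         ∑ i, max ((a i) ^ 2 - s) 0) := by
  have hxstar : (fun i => a i * max (Real.sign (a i ^ 2 - s)) 0 /
      √(∑ j, a j ^ 2 * max (Real.sign (a j ^ 2 - s)) 0)) = l2Normalize (hardThreshold s a) := by
    simp only [mul_max_sign_zero_eq_hardThreshold, sq_mul_max_sign_zero_eq_sq_hardThreshold]
    rfl
  obtain ⟨hnorm, hvalue⟩ := objective_l2Normalize_hardThreshold hs.le a hex
  have hsqrt : √(∑ i, l2Normalize (hardThreshold s a) i ^ 2) = 1 := by rw [hnorm, Real.sqrt_one]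
  refine ⟨⟨⟨_, hsqrt, hvalue.symm⟩, ?_⟩, ?_⟩
  · rintro y ⟨x, hx, rfl⟩
    exact objective_le_sum_max_zero a s (Real.sqrt_eq_one.mp hx)
  · rw [hxstar]
    exact ⟨hsqrt, hvalue⟩
end

section
/- For a ∈ R^n and w ∈ R^n with positive entries, max{⟨a,x⟩ − Σ_i w_i|x_i| : ||x||_2 ≤ 1} = sqrt(Σ_i (|a_i| − w_i)_+²) = ||S_w(a)||_2, and if S_w(a) ≠ 0 the maximizer is x* = S_w(a)/||S_w(a)||_2. -/
/-!
On each coordinate, `a x - w |x| ≤ (|a| - w)₊ |x|`, so by Cauchy–Schwarz the objective is at most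
`‖(|a| - w)₊‖₂ ‖x‖₂ ≤ ‖(|a| - w)₊‖₂` on the unit ball. The soft-thresholded vector `z = S_w(a)`
has `|z_i| = (|a_i| - w_i)₊` and `a_i z_i - w_i |z_i| = (|a_i| - w_i)₊²`, so the objective equals
`‖z‖₂²` at `z` and, being positively homogeneous, equals `‖z‖₂` at `z / ‖z‖₂`.
-/

open Finset

noncomputable section

namespace SoftThreshold

def softThreshold (w a : ℝ) : ℝ := max (|a| - w) 0 * Real.sign a

theorem abs_softThreshold {w : ℝ} (hw : 0 ≤ w) (a : ℝ) :
    |softThreshold w a| = max (|a| - w) 0 := by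
  rcases lt_trichotomy a 0 with ha | rfl | ha
  · simp [softThreshold, Real.sign_of_neg ha]
  · simp [softThreshold, hw]
  · simp [softThreshold, Real.sign_of_pos ha]

theorem mul_softThreshold (w a : ℝ) : a * softThreshold w a = |a| * max (|a| - w) 0 := by
  rcases lt_trichotomy a 0 with ha | rfl | ha
  · rw [softThreshold, Real.sign_of_neg ha, abs_of_neg ha]; ring
  · simp [softThreshold]
  · rw [softThreshold, Real.sign_of_pos ha, abs_of_pos ha]; ring

theorem mul_sub_mul_abs_le (a w x : ℝ) : a * x - w * |x| ≤ max (|a| - w) 0 * |x| :=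
  calc a * x - w * |x| ≤ (|a| - w) * |x| := by
        nlinarith [neg_abs_le (a * x), le_abs_self (a * x), abs_mul a x]
    _ ≤ max (|a| - w) 0 * |x| := mul_le_mul_of_nonneg_right (le_max_left _ _) (abs_nonneg x)

theorem mul_max_zero_eq_sq (t : ℝ) : t * max t 0 = max t 0 ^ 2 := by
  rcases le_total t 0 with ht | ht
  · simp [max_eq_right ht]
  · rw [max_eq_left ht, sq]

variable {ι : Type*} [Fintype ι]

def l1PenalizedInner (a w x : ι → ℝ) : ℝ := ∑ i, a i * x i - ∑ i, w i * |x i|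

theorem l1PenalizedInner_smul (a w x : ι → ℝ) {c : ℝ} (hc : 0 ≤ c) :
    l1PenalizedInner a w (c • x) = c * l1PenalizedInner a w x := by
  simp only [l1PenalizedInner, Pi.smul_apply, smul_eq_mul, abs_mul, abs_of_nonneg hc, mul_sub,
    mul_sum]
  congr 1 <;> exact sum_congr rfl fun i _ => by ring

theorem l1PenalizedInner_le (a w x : ι → ℝ) :
    l1PenalizedInner a w x ≤ √(∑ i, max (|a i| - w i) 0 ^ 2) * √(∑ i, x i ^ 2) :=
  calc l1PenalizedInner a w x ≤ ∑ i, max (|a i| - w i) 0 * |x i| := by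
        rw [l1PenalizedInner, ← sum_sub_distrib]
        exact sum_le_sum fun i _ => mul_sub_mul_abs_le (a i) (w i) (x i)
    _ ≤ √(∑ i, max (|a i| - w i) 0 ^ 2) * √(∑ i, |x i| ^ 2) :=
        Real.sum_mul_le_sqrt_mul_sqrt _ _ _
    _ = √(∑ i, max (|a i| - w i) 0 ^ 2) * √(∑ i, x i ^ 2) := by simp only [sq_abs]

theorem sum_sq_softThreshold (a : ι → ℝ) {w : ι → ℝ} (hw : ∀ i, 0 ≤ w i) :
    ∑ i, softThreshold (w i) (a i) ^ 2 = ∑ i, max (|a i| - w i) 0 ^ 2 :=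
  sum_congr rfl fun i _ => by rw [← sq_abs, abs_softThreshold (hw i)]

theorem l1PenalizedInner_softThreshold (a : ι → ℝ) {w : ι → ℝ} (hw : ∀ i, 0 ≤ w i) :
    l1PenalizedInner a w (fun i => softThreshold (w i) (a i)) = ∑ i, max (|a i| - w i) 0 ^ 2 := by
  rw [l1PenalizedInner, ← sum_sub_distrib]
  refine sum_congr rfl fun i _ => ?_
  rw [mul_softThreshold, abs_softThreshold (hw i), ← sub_mul, mul_max_zero_eq_sq]

theorem sqrt_sum_sq_div_sqrt_sum_sq_le_one (z : ι → ℝ) :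
    √(∑ i, (z i / √(∑ j, z j ^ 2)) ^ 2) ≤ 1 := by
  have hsum : ∑ i, (z i / √(∑ j, z j ^ 2)) ^ 2 = (∑ j, z j ^ 2) / (∑ j, z j ^ 2) := by
    simp only [div_pow, ← sum_div, Real.sq_sqrt (sum_nonneg fun j _ => sq_nonneg (z j))]
  rw [hsum, Real.sqrt_le_one]
  exact div_self_le_one _

/-- When `S_w(a) = 0` the normalized vector is the junk value `0 / 0 = 0`, which is still
a maximizer. -/
theorem l1PenalizedInner_normalized_softThreshold (a : ι → ℝ) {w : ι → ℝ} (hw : ∀ i, 0 ≤ w i) :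
    l1PenalizedInner a w (fun i => softThreshold (w i) (a i) /
        √(∑ j, softThreshold (w j) (a j) ^ 2)) = √(∑ i, max (|a i| - w i) 0 ^ 2) := by
  have hsmul : (fun i => softThreshold (w i) (a i) / √(∑ j, softThreshold (w j) (a j) ^ 2)) =
      (√(∑ i, max (|a i| - w i) 0 ^ 2))⁻¹ • fun i => softThreshold (w i) (a i) := by
    rw [sum_sq_softThreshold a hw]
    ext i
    simp only [Pi.smul_apply, smul_eq_mul, div_eq_inv_mul]
  rw [hsmul, l1PenalizedInner_smul _ _ _ (inv_nonneg.mpr (Real.sqrt_nonneg _)),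
    l1PenalizedInner_softThreshold a hw]
  nth_rewrite 2 [← Real.mul_self_sqrt (sum_nonneg fun i _ => sq_nonneg _)]
  rw [← mul_assoc, inv_mul_mul_self]

end SoftThreshold

end

open SoftThreshold in
/-- Maximum of a weighted-`l1`-penalized linear function over the `l2` unit ball equals
`‖S_w(a)‖₂`, attained at the normalized soft-thresholded vector when it is nonzero. -/
theorem max_weighted_l1_penalized_linear (n : ℕ) (a w : Fin n → ℝ)
    (hw : ∀ i, 0 < w i) :
    IsGreatest {y : ℝ | ∃ x : Fin n → ℝ,
        Real.sqrt (∑ i, (x i) ^ 2) ≤ 1 ∧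
        y = (∑ i, a i * x i) - ∑ i, w i * |x i|}
      (Real.sqrt (∑ i, (max (|a i| - w i) 0) ^ 2)) ∧
    Real.sqrt (∑ i, (max (|a i| - w i) 0) ^ 2) =
      Real.sqrt (∑ i, (max (|a i| - w i) 0 * Real.sign (a i)) ^ 2) ∧
    ((fun i => max (|a i| - w i) 0 * Real.sign (a i)) ≠ 0 →
      (letI xstar : Fin n → ℝ := fun i =>
          max (|a i| - w i) 0 * Real.sign (a i) /
            Real.sqrt (∑ j, (max (|a j| - w j) 0 * Real.sign (a j)) ^ 2)
       Real.sqrt (∑ i, (xstar i) ^ 2) ≤ 1 ∧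
         (∑ i, a i * xstar i) - ∑ i, w i * |xstar i| =
           Real.sqrt (∑ i, (max (|a i| - w i) 0) ^ 2))) := by
  have hw' : ∀ i, 0 ≤ w i := fun i => (hw i).le
  have hunit := sqrt_sum_sq_div_sqrt_sum_sq_le_one fun i => softThreshold (w i) (a i)
  have hvalue := l1PenalizedInner_normalized_softThreshold a hw'
  refine ⟨⟨⟨_, hunit, hvalue.symm⟩, ?_⟩, congrArg Real.sqrt (sum_sq_softThreshold a hw').symm,
    fun _ => ⟨hunit, hvalue⟩⟩
  rintro y ⟨x, hx, rfl⟩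
  calc l1PenalizedInner a w x ≤ √(∑ i, max (|a i| - w i) 0 ^ 2) * √(∑ i, x i ^ 2) :=
        l1PenalizedInner_le a w x
    _ ≤ √(∑ i, max (|a i| - w i) 0 ^ 2) := mul_le_of_le_one_right (Real.sqrt_nonneg _) hx
end

section
/- For a ∈ R^n and k > 0, strong duality holds: max{⟨a,x⟩ : ||x||_2 ≤ 1, ||x||_1 ≤ k} = min_{λ ≥ 0} { λk + ||S_{λe}(a)||_2 }, where S_{λe}(a)_i = (|a_i| − λ)_+ sgn(a_i); moreover if λ* attains the minimum and S_{λ*e}(a) ≠ 0, then x* = S_{λ*e}(a)/||S_{λ*e}(a)||_2 attains the maximum. -/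
/-!
Weak duality: since `|aᵢ - S_λ(a)ᵢ| ≤ λ`, Cauchy–Schwarz gives
`⟨a, x⟩ ≤ λ ‖x‖₁ + ‖S_λ(a)‖₂ ‖x‖₂ ≤ λ k + ‖S_λ(a)‖₂` on the primal feasible set.

The dual objective `g λ = λ k + ‖S_λ(a)‖₂` is continuous and `g λ ≥ λ k`, so it attains its
minimum on `[0, ∞)` at some `λ`. Since `|S_μ(a)ᵢ| ≤ ||S_λ(a)ᵢ| - (μ - λ)|`, expanding the square
gives `‖S_μ(a)‖₂² ≤ ‖S_λ(a)‖₂² - 2 (μ - λ) ‖S_λ(a)‖₁ + (μ - λ)² n`, and comparing `g λ ≤ g μ`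
for `μ → λ⁺` and `μ → λ⁻` yields `‖S‖₁ ≤ k ‖S‖₂`, with equality if `λ > 0`. Together with
`⟨a, S⟩ = ‖S‖₂² + λ ‖S‖₁` this makes `S / ‖S‖₂` feasible with value `g λ`.

If `S = 0` but `λ > 0`, then `|aᵢ| ≤ λ` for all `i`, and comparing with `g (λ - ε)` for `ε` below
every gap `λ - |aᵢ| > 0` shows that the number `N` of indices with `|aᵢ| = λ` satisfies `N ≥ k²`;
spreading the mass `k / N` over these indices along the signs of `a` attains `λ k`.
-/

open Finset Filter Topology

noncomputable def softThreshold (lam t : ℝ) : ℝ := max (|t| - lam) 0 * Real.sign t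

section softThreshold

variable {lam mu : ℝ}

theorem abs_softThreshold (hlam : 0 ≤ lam) (t : ℝ) :
    |softThreshold lam t| = max (|t| - lam) 0 := by
  rcases lt_trichotomy t 0 with ht | rfl | ht
  · rw [softThreshold, Real.sign_of_neg ht, abs_mul, abs_neg, abs_one, mul_one,
      abs_of_nonneg (le_max_right _ _)]
  · simp [softThreshold, hlam]
  · rw [softThreshold, Real.sign_of_pos ht, abs_mul, abs_one, mul_one,
      abs_of_nonneg (le_max_right _ _)]

theorem abs_sub_softThreshold_le (hlam : 0 ≤ lam) (t : ℝ) : |t - softThreshold lam t| ≤ lam := by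
  rcases lt_trichotomy t 0 with ht | rfl | ht
  · rw [softThreshold, Real.sign_of_neg ht, abs_of_neg ht, abs_le]
    constructor <;> cases max_cases (-t - lam) 0 <;> linarith
  · simpa [softThreshold] using hlam
  · rw [softThreshold, Real.sign_of_pos ht, abs_of_pos ht, abs_le]
    constructor <;> cases max_cases (t - lam) 0 <;> linarith

theorem mul_softThreshold (lam t : ℝ) :
    t * softThreshold lam t = softThreshold lam t ^ 2 + lam * |softThreshold lam t| := by
  rcases lt_trichotomy t 0 with ht | rfl | ht
  · rw [softThreshold, Real.sign_of_neg ht, abs_of_neg ht]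
    rcases max_cases (-t - lam) 0 with ⟨h, h'⟩ | ⟨h, -⟩ <;> rw [h]
    · rw [abs_of_nonpos (by linarith)]; ring
    · simp
  · simp [softThreshold]
  · rw [softThreshold, Real.sign_of_pos ht, abs_of_pos ht]
    rcases max_cases (t - lam) 0 with ⟨h, h'⟩ | ⟨h, -⟩ <;> rw [h]
    · rw [abs_of_nonneg (by linarith)]; ring
    · simp

theorem max_sub_le_abs_max_sub (u d : ℝ) : max (u - d) 0 ≤ |max u 0 - d| := by
  rcases max_cases u 0 with ⟨h, hu⟩ | ⟨h, hu⟩ <;> rw [h]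
  · exact max_le (le_abs_self _) (abs_nonneg _)
  · exact max_le (by linarith [le_abs_self (0 - d)]) (abs_nonneg _)

theorem abs_softThreshold_le_abs_sub (hlam : 0 ≤ lam) (hmu : 0 ≤ mu) (t : ℝ) :
    |softThreshold mu t| ≤ |(|softThreshold lam t| - (mu - lam))| := by
  rw [abs_softThreshold hlam, abs_softThreshold hmu, show |t| - mu = |t| - lam - (mu - lam) by ring]
  exact max_sub_le_abs_max_sub _ _

end softThreshold

section Vector

variable {ι : Type*} [Fintype ι]

noncomputable def l2Norm (x : ι → ℝ) : ℝ := √(∑ i, x i ^ 2)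

def l1Norm (x : ι → ℝ) : ℝ := ∑ i, |x i|

@[simp]
theorem l2Norm_zero : l2Norm (0 : ι → ℝ) = 0 := by simp [l2Norm]

theorem l2Norm_nonneg (x : ι → ℝ) : 0 ≤ l2Norm x := Real.sqrt_nonneg _

theorem sq_l2Norm (x : ι → ℝ) : l2Norm x ^ 2 = ∑ i, x i ^ 2 :=
  Real.sq_sqrt (sum_nonneg fun i _ => sq_nonneg (x i))

theorem l2Norm_pos {x : ι → ℝ} (hx : x ≠ 0) : 0 < l2Norm x := by
  obtain ⟨i, hi⟩ := Function.ne_iff.1 hx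
  exact Real.sqrt_pos.2 <| lt_of_lt_of_le (pow_two_pos_of_ne_zero hi)
    (single_le_sum (f := fun j => x j ^ 2) (fun j _ => sq_nonneg (x j)) (mem_univ i))

theorem l1Norm_le_sqrt_card_mul_l2Norm (x : ι → ℝ) :
    l1Norm x ≤ √(Fintype.card ι) * l2Norm x := by
  have h := sq_sum_le_card_mul_sum_sq (s := univ) (f := fun i => |x i|)
  simp only [sq_abs, ← sq_l2Norm, card_univ] at h
  rw [← Real.sqrt_sq (l2Norm_nonneg x), ← Real.sqrt_mul (Nat.cast_nonneg _)]
  exact Real.le_sqrt_of_sq_le h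

theorem l2Norm_div_self {x : ι → ℝ} (hx : x ≠ 0) : l2Norm (fun i => x i / l2Norm x) = 1 := by
  have hpos := l2Norm_pos hx
  rw [l2Norm]
  simp only [div_pow, ← sum_div, ← sq_l2Norm x, div_self (pow_pos hpos 2).ne', Real.sqrt_one]

theorem l1Norm_div (x : ι → ℝ) {c : ℝ} (hc : 0 ≤ c) : l1Norm (fun i => x i / c) = l1Norm x / c := by
  simp only [l1Norm, abs_div, abs_of_nonneg hc, sum_div]

theorem sum_mul_le_l2Norm_mul_l2Norm (x y : ι → ℝ) : ∑ i, x i * y i ≤ l2Norm x * l2Norm y :=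
  Real.sum_mul_le_sqrt_mul_sqrt _ _ _

end Vector

section Duality

variable {ι : Type*} [Fintype ι] {a : ι → ℝ} {k lam mu : ℝ}

noncomputable def dualObjective (a : ι → ℝ) (k lam : ℝ) : ℝ :=
  lam * k + l2Norm (softThreshold lam ∘ a)

theorem sum_mul_le_dualObjective (hlam : 0 ≤ lam) {x : ι → ℝ} (hx2 : l2Norm x ≤ 1)
    (hx1 : l1Norm x ≤ k) : ∑ i, a i * x i ≤ dualObjective a k lam := by
  set s := softThreshold lam ∘ a
  have hres : ∑ i, (a i - s i) * x i ≤ lam * l1Norm x := by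
    rw [l1Norm, mul_sum]
    refine sum_le_sum fun i _ => ?_
    calc (a i - s i) * x i ≤ |a i - s i| * |x i| := (le_abs_self _).trans (abs_mul _ _).le
      _ ≤ lam * |x i| := by gcongr; exact abs_sub_softThreshold_le hlam (a i)
  calc ∑ i, a i * x i = ∑ i, (a i - s i) * x i + ∑ i, s i * x i := by
        rw [← sum_add_distrib]; exact sum_congr rfl fun i _ => by ring
    _ ≤ lam * k + l2Norm s * 1 := by
        gcongr ?_ + ?_
        · exact hres.trans (by gcongr)
        · exact (sum_mul_le_l2Norm_mul_l2Norm s x).trans (by gcongr; exact l2Norm_nonneg s)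
    _ = dualObjective a k lam := by rw [mul_one, dualObjective]

theorem continuous_dualObjective (a : ι → ℝ) (k : ℝ) : Continuous (dualObjective a k) := by
  unfold dualObjective l2Norm softThreshold
  fun_prop

theorem exists_isMinOn_dualObjective (a : ι → ℝ) (hk : 0 < k) :
    ∃ lam ∈ Set.Ici 0, IsMinOn (dualObjective a k) (Set.Ici 0) lam := by
  refine (continuous_dualObjective a k).continuousOn.exists_isMinOn' isClosed_Ici
    Set.self_mem_Ici ?_
  set B := dualObjective a k 0 / k
  refine mem_inf_of_inter (isCompact_Icc (a := 0) (b := B)).compl_mem_cocompact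
    (mem_principal_self _) ?_
  rintro mu ⟨hmu, hmu0 : 0 ≤ mu⟩
  have hBmu : B < mu := by simpa [hmu0] using hmu
  calc dualObjective a k 0 = B * k := (div_mul_cancel₀ _ hk.ne').symm
    _ ≤ mu * k := by gcongr
    _ ≤ dualObjective a k mu := le_add_of_nonneg_right (l2Norm_nonneg _)

theorem sq_l2Norm_softThreshold_le (hlam : 0 ≤ lam) (hmu : 0 ≤ mu) (a : ι → ℝ) :
    l2Norm (softThreshold mu ∘ a) ^ 2 ≤ l2Norm (softThreshold lam ∘ a) ^ 2
      - 2 * (mu - lam) * l1Norm (softThreshold lam ∘ a) + (mu - lam) ^ 2 * Fintype.card ι := by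
  calc l2Norm (softThreshold mu ∘ a) ^ 2
      ≤ ∑ i, (|softThreshold lam (a i)| - (mu - lam)) ^ 2 := by
        rw [sq_l2Norm]
        exact sum_le_sum fun i _ => sq_le_sq.2 (abs_softThreshold_le_abs_sub hlam hmu (a i))
    _ = _ := by
        simp only [sub_sq, sum_add_distrib, sum_sub_distrib, sq_abs, sq_l2Norm, l1Norm,
          sum_const, card_univ, nsmul_eq_mul, ← sum_mul, ← mul_sum]
        simp only [Function.comp_apply]
        ring

theorem nonpos_of_eventually_le_mul {c d : ℝ} (h : ∀ᶠ ε in 𝓝[>] 0, c ≤ ε * d) : c ≤ 0 :=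
  ge_of_tendsto (((continuous_mul_const d).tendsto' 0 0 (zero_mul d)).mono_left
    nhdsWithin_le_nhds) h

theorem mul_sub_le_of_isMinOn (hmin : IsMinOn (dualObjective a k) (Set.Ici 0) lam)
    (hlam : 0 ≤ lam) (hmu : 0 ≤ mu) (hmuk : (mu - lam) * k ≤ l2Norm (softThreshold lam ∘ a)) :
    2 * (mu - lam) * (l1Norm (softThreshold lam ∘ a) - k * l2Norm (softThreshold lam ∘ a))
      ≤ (mu - lam) ^ 2 * (Fintype.card ι - k ^ 2) := by
  have hle : l2Norm (softThreshold lam ∘ a) - (mu - lam) * k ≤ l2Norm (softThreshold mu ∘ a) := by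
    have := isMinOn_iff.1 hmin mu hmu
    rw [dualObjective, dualObjective] at this
    linarith
  have hsq := pow_le_pow_left₀ (sub_nonneg.2 hmuk) hle 2
  linear_combination hsq + sq_l2Norm_softThreshold_le hlam hmu a

theorem l1Norm_le_of_isMinOn (hk : 0 < k) (hmin : IsMinOn (dualObjective a k) (Set.Ici 0) lam)
    (hlam : 0 ≤ lam) :
    l1Norm (softThreshold lam ∘ a) ≤ k * l2Norm (softThreshold lam ∘ a) := by
  set r := l2Norm (softThreshold lam ∘ a)
  rcases (l2Norm_nonneg (softThreshold lam ∘ a)).eq_or_lt with hr | hr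
  · simpa [r, ← hr] using l1Norm_le_sqrt_card_mul_l2Norm (softThreshold lam ∘ a)
  have : ∀ᶠ δ in 𝓝[>] 0,
      2 * (l1Norm (softThreshold lam ∘ a) - k * r) ≤ δ * (Fintype.card ι - k ^ 2) := by
    filter_upwards [Ioc_mem_nhdsGT (div_pos hr hk)] with δ ⟨hδ, hδr⟩
    have := mul_sub_le_of_isMinOn hmin hlam (add_nonneg hlam hδ.le)
      (by rw [add_sub_cancel_left]; exact (le_div_iff₀ hk).1 hδr)
    rw [add_sub_cancel_left] at this
    exact le_of_mul_le_mul_left (by linear_combination this) hδ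
  linarith [nonpos_of_eventually_le_mul this]

theorem le_l1Norm_of_isMinOn (hk : 0 ≤ k) (hmin : IsMinOn (dualObjective a k) (Set.Ici 0) lam)
    (hlam : 0 < lam) :
    k * l2Norm (softThreshold lam ∘ a) ≤ l1Norm (softThreshold lam ∘ a) := by
  have : ∀ᶠ ε in 𝓝[>] 0, 2 * (k * l2Norm (softThreshold lam ∘ a) - l1Norm (softThreshold lam ∘ a))
      ≤ ε * (Fintype.card ι - k ^ 2) := by
    filter_upwards [Ioc_mem_nhdsGT hlam] with ε ⟨hε, hεlam⟩
    have := mul_sub_le_of_isMinOn hmin hlam.le (sub_nonneg.2 hεlam)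
      (by nlinarith [l2Norm_nonneg (softThreshold lam ∘ a)])
    rw [sub_sub_cancel_left] at this
    exact le_of_mul_le_mul_left (by linear_combination this) hε
  linarith [nonpos_of_eventually_le_mul this]

theorem mul_l1Norm_eq_of_isMinOn (hk : 0 < k) (hmin : IsMinOn (dualObjective a k) (Set.Ici 0) lam)
    (hlam : 0 ≤ lam) :
    lam * l1Norm (softThreshold lam ∘ a) = lam * (k * l2Norm (softThreshold lam ∘ a)) := by
  rcases hlam.eq_or_lt with rfl | hlam
  · simp only [zero_mul]
  · rw [le_antisymm (l1Norm_le_of_isMinOn hk hmin hlam.le) (le_l1Norm_of_isMinOn hk.le hmin hlam)]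

theorem sum_mul_softThreshold (a : ι → ℝ) (lam : ℝ) :
    ∑ i, a i * softThreshold lam (a i)
      = l2Norm (softThreshold lam ∘ a) ^ 2 + lam * l1Norm (softThreshold lam ∘ a) := by
  simp only [mul_softThreshold, sum_add_distrib, ← mul_sum, sq_l2Norm, l1Norm, Function.comp_apply]

theorem normalized_softThreshold_attains_dualObjective (hk : 0 < k)
    (hmin : IsMinOn (dualObjective a k) (Set.Ici 0) lam) (hlam : 0 ≤ lam)
    (hS : softThreshold lam ∘ a ≠ 0) :
    let x := fun i => softThreshold lam (a i) / l2Norm (softThreshold lam ∘ a)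
    l2Norm x ≤ 1 ∧ l1Norm x ≤ k ∧ ∑ i, a i * x i = dualObjective a k lam := by
  have hr := l2Norm_pos hS
  refine ⟨(l2Norm_div_self hS).le, ?_, ?_⟩
  · rw [l1Norm_div _ hr.le, div_le_iff₀ hr]
    exact l1Norm_le_of_isMinOn hk hmin hlam
  · calc ∑ i, a i * (softThreshold lam (a i) / l2Norm (softThreshold lam ∘ a))
        = (∑ i, a i * softThreshold lam (a i)) / l2Norm (softThreshold lam ∘ a) := by
          simp only [mul_div_assoc, sum_div]
      _ = dualObjective a k lam := by
          rw [sum_mul_softThreshold, mul_l1Norm_eq_of_isMinOn hk hmin hlam, dualObjective]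
          field_simp
          ring

theorem abs_le_of_softThreshold_eq_zero {t : ℝ} (hlam : 0 ≤ lam) (h : softThreshold lam t = 0) :
    |t| ≤ lam := by
  have := abs_softThreshold hlam t
  rw [h, abs_zero, eq_comm, max_eq_right_iff] at this
  linarith

theorem sq_le_card_of_isMinOn (hk : 0 ≤ k) (hmin : IsMinOn (dualObjective a k) (Set.Ici 0) lam)
    (hlam : 0 < lam) (hS : softThreshold lam ∘ a = 0) : k ^ 2 ≤ #{i | |a i| = lam} := by
  have habs i : |a i| ≤ lam := abs_le_of_softThreshold_eq_zero hlam.le (congrFun hS i)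
  obtain ⟨ε, ⟨hε, hεlam⟩, hgap⟩ : ∃ ε ∈ Set.Ioc 0 lam, ∀ i, |a i| < lam → ε ≤ lam - |a i| := by
    refine (Filter.Eventually.and (Ioc_mem_nhdsGT hlam) (eventually_all.2 fun i => ?_)).exists
    by_cases hi : |a i| < lam
    · exact ((eventually_le_nhds (sub_pos.2 hi)).filter_mono nhdsWithin_le_nhds).mono
        fun ε h _ => h
    · exact .of_forall fun ε h => absurd h hi
  have hterm i : softThreshold (lam - ε) (a i) ^ 2 = if |a i| = lam then ε ^ 2 else 0 := by
    rw [← sq_abs, abs_softThreshold (by linarith)]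
    split_ifs with h
    · rw [h, sub_sub_cancel, max_eq_left hε.le]
    · rw [max_eq_right (by linarith [hgap i (lt_of_le_of_ne (habs i) h)])]
      ring
  have hnorm : l2Norm (softThreshold (lam - ε) ∘ a) = ε * √(#{i | |a i| = lam}) := by
    simp only [l2Norm, Function.comp_apply, hterm]
    rw [← sum_filter, sum_const, nsmul_eq_mul,
      Real.sqrt_mul (Nat.cast_nonneg _), Real.sqrt_sq hε.le, mul_comm]
  have hdual := isMinOn_iff.1 hmin (lam - ε) (sub_nonneg.2 hεlam)
  rw [dualObjective, dualObjective, hS, hnorm, l2Norm_zero] at hdual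
  exact (Real.le_sqrt hk (Nat.cast_nonneg _)).1
    (le_of_mul_le_mul_left (by linear_combination hdual) hε)

theorem exists_sum_mul_eq_mul_of_sq_le_card (hk : 0 < k) (hlam : 0 < lam)
    (hcard : k ^ 2 ≤ #{i | |a i| = lam}) :
    ∃ x : ι → ℝ, l2Norm x ≤ 1 ∧ l1Norm x ≤ k ∧ ∑ i, a i * x i = lam * k := by
  set N : ℝ := ↑(#{i | |a i| = lam})
  have hN : 0 < N := (pow_pos hk 2).trans_le hcard
  have hsq {i} (h : |a i| = lam) : a i ^ 2 = lam ^ 2 := by rw [← sq_abs, h]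
  have hsum (c : ℝ) : ∑ i, (if |a i| = lam then c else 0) = N * c := by
    rw [← sum_filter, sum_const, nsmul_eq_mul]
  refine ⟨fun i => if |a i| = lam then k / N * (a i / lam) else 0, ?_, ?_, ?_⟩
  · have hterm i : (if |a i| = lam then k / N * (a i / lam) else 0) ^ 2
        = if |a i| = lam then (k / N) ^ 2 else 0 := by
      split_ifs with h
      · rw [mul_pow, div_pow (a i), hsq h, div_self (pow_pos hlam 2).ne', mul_one]
      · exact zero_pow two_ne_zero
    rw [l2Norm, Real.sqrt_le_one, sum_congr rfl fun i _ => hterm i, hsum]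
    field_simp
    exact hcard
  · have habs i : |if |a i| = lam then k / N * (a i / lam) else 0|
        = if |a i| = lam then k / N else 0 := by
      split_ifs with h
      · rw [abs_mul, abs_div (a i), h, abs_of_pos hlam, div_self hlam.ne', mul_one,
          abs_of_pos (div_pos hk hN)]
      · exact abs_zero
    rw [l1Norm, sum_congr rfl fun i _ => habs i, hsum, mul_div_cancel₀ _ hN.ne']
  · have hmul i : a i * (if |a i| = lam then k / N * (a i / lam) else 0)
        = if |a i| = lam then k / N * lam else 0 := by
      split_ifs with h
      · rw [show a i * (k / N * (a i / lam)) = k / N * (a i ^ 2 / lam) by ring, hsq h, sq,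
          mul_self_div_self]
      · exact mul_zero _
    rw [sum_congr rfl fun i _ => hmul i, hsum]
    field_simp

theorem exists_sum_mul_eq_dualObjective_of_isMinOn (hk : 0 < k)
    (hmin : IsMinOn (dualObjective a k) (Set.Ici 0) lam) (hlam : 0 ≤ lam) :
    ∃ x : ι → ℝ, l2Norm x ≤ 1 ∧ l1Norm x ≤ k ∧ ∑ i, a i * x i = dualObjective a k lam := by
  by_cases hS : softThreshold lam ∘ a = 0
  · rcases hlam.eq_or_lt with rfl | hlam
    · exact ⟨0, by simp, by simp [l1Norm, hk.le], by simp [dualObjective, hS]⟩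
    · obtain ⟨x, hx2, hx1, hx⟩ := exists_sum_mul_eq_mul_of_sq_le_card hk hlam
        (sq_le_card_of_isMinOn hk.le hmin hlam hS)
      exact ⟨x, hx2, hx1, by rw [hx, dualObjective, hS, l2Norm_zero, add_zero]⟩
  · exact ⟨_, normalized_softThreshold_attains_dualObjective hk hmin hlam hS⟩

end Duality

/-- Strong duality for maximizing a linear function over the intersection of the `l2`
unit ball and an `l1` ball, with dual given by soft thresholding. -/
theorem l1_l2_constrained_strong_duality (n : ℕ) (a : Fin n → ℝ) (k : ℝ) (hk : 0 < k) :
    ∃ M : ℝ,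
      IsGreatest {y : ℝ | ∃ x : Fin n → ℝ,
          Real.sqrt (∑ i, (x i) ^ 2) ≤ 1 ∧ (∑ i, |x i|) ≤ k ∧
          y = ∑ i, a i * x i} M ∧
      IsLeast {y : ℝ | ∃ lam : ℝ, 0 ≤ lam ∧
          y = lam * k +
            Real.sqrt (∑ i, (max (|a i| - lam) 0 * Real.sign (a i)) ^ 2)} M ∧
      ∀ lam : ℝ, 0 ≤ lam →
        lam * k + Real.sqrt (∑ i, (max (|a i| - lam) 0 * Real.sign (a i)) ^ 2) = M →
        (fun i => max (|a i| - lam) 0 * Real.sign (a i)) ≠ 0 →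
        (letI xstar : Fin n → ℝ := fun i =>
            max (|a i| - lam) 0 * Real.sign (a i) /
              Real.sqrt (∑ j, (max (|a j| - lam) 0 * Real.sign (a j)) ^ 2)
         Real.sqrt (∑ i, (xstar i) ^ 2) ≤ 1 ∧ (∑ i, |xstar i|) ≤ k ∧
           (∑ i, a i * xstar i) = M) := by
  obtain ⟨lam₀, hlam₀, hmin₀⟩ := exists_isMinOn_dualObjective a hk
  obtain ⟨x₀, hx₀2, hx₀1, hx₀⟩ := exists_sum_mul_eq_dualObjective_of_isMinOn hk hmin₀ hlam₀
  refine ⟨dualObjective a k lam₀, ⟨⟨x₀, hx₀2, hx₀1, hx₀.symm⟩, ?_⟩,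
    ⟨⟨lam₀, hlam₀, rfl⟩, ?_⟩, fun lam hlam hM hS => ?_⟩
  · rintro _ ⟨x, hx2, hx1, rfl⟩
    exact sum_mul_le_dualObjective hlam₀ hx2 hx1
  · rintro _ ⟨lam, hlam, rfl⟩
    exact hmin₀ hlam
  · have hmin : IsMinOn (dualObjective a k) (Set.Ici 0) lam := fun mu hmu => hM.trans_le (hmin₀ hmu)
    exact hM ▸ normalized_softThreshold_attains_dualObjective hk hmin hlam hS
end
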